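/- arXiv:1302.2046 — 6 statements merged into one kernel-verified Lean document; each statement's English description precedes it below -/
import Mathlib

section
/- Let A be a Poisson K-algebra, and let α, δ be K-linear maps of A. The polynomial ring R = A[X] admits a Poisson bracket extending that of A with {X, a} = α(a) X + δ(a) for all a ∈ A if and only if α is a Poisson derivation of A and δ is a Poisson α-derivation of A. -/
/-!
If a Poisson bracket on `A[X]` extends that of `A` with `{X, a} = α(a) X + δ(a)`, comparing the
coefficients of `X` and `1` in the Leibniz rule for `{X, ab}` shows that `α` and `δ` are
derivations, and in the Jacobi identity for `X, a, b` it gives exactly the two Poisson conditions.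

Conversely, with `D = X ᾱ + δ̄` (coefficientwise application), the bracket
`{p, q} = ∑ X^(i+j) {pᵢ, qⱼ} + p' D(q) - q' D(p)` is a skew-symmetric biderivation with the
prescribed values on `C a` and `X`. Its Jacobiator is then a derivation in each argument, so it
vanishes as soon as it vanishes on the ring generators `C a` and `X` of `A[X]`; there it reduces
to the Jacobi identity of `A` and to the same computation for `X, a, b`.
-/

/-- A Poisson bracket on a commutative `K`-algebra `A`: a skew-symmetric `K`-bilinear
map satisfying the Jacobi identity and the Leibniz rule. -/
structure PoissonStructure (K A : Type*) [CommRing K] [CommRing A] [Algebra K A] where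
  br : A → A → A
  add_left : ∀ a b c : A, br (a + b) c = br a c + br b c
  smul_left : ∀ (k : K) (a b : A), br (k • a) b = k • br a b
  skew : ∀ a b : A, br a b = - br b a
  leibniz : ∀ a b c : A, br a (b * c) = br a b * c + b * br a c
  jacobi : ∀ a b c : A, br a (br b c) + br b (br c a) + br c (br a b) = 0

/-- `α` is a Poisson derivation of `(A, {·,·})`. -/
def IsPoissonDer {K A : Type*} [CommRing K] [CommRing A] [Algebra K A]
    (P : PoissonStructure K A) (α : A →ₗ[K] A) : Prop :=
  (∀ a b : A, α (a * b) = α a * b + a * α b) ∧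
    ∀ a b : A, α (P.br a b) = P.br (α a) b + P.br a (α b)

/-- `δ` is a Poisson `α`-derivation of `(A, {·,·})`. -/
def IsPoissonAlphaDer {K A : Type*} [CommRing K] [CommRing A] [Algebra K A]
    (P : PoissonStructure K A) (α δ : A →ₗ[K] A) : Prop :=
  (∀ a b : A, δ (a * b) = δ a * b + a * δ b) ∧
    ∀ a b : A, δ (P.br a b) = P.br (δ a) b + P.br a (δ b) + α a * δ b - δ a * α b

open Polynomial

structure IsSkewBiderivation {R : Type*} [CommRing R] (br : R → R → R) : Prop where
  add_left : ∀ a b c : R, br (a + b) c = br a c + br b c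
  skew : ∀ a b : R, br a b = -br b a
  leibniz : ∀ a b c : R, br a (b * c) = br a b * c + b * br a c

def jacobiator {R : Type*} [CommRing R] (br : R → R → R) (a b c : R) : R :=
  br a (br b c) + br b (br c a) + br c (br a b)

lemma jacobiator_cyclic {R : Type*} [CommRing R] (br : R → R → R) (a b c : R) :
    jacobiator br a b c = jacobiator br b c a := by
  unfold jacobiator; ring

lemma eq_zero_on_closure_of_leibniz {R : Type*} [CommRing R] {D : R → R}
    (hadd : ∀ a b, D (a + b) = D a + D b) (hmul : ∀ a b, D (a * b) = D a * b + a * D b)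
    {s : Set R} (hs : ∀ x ∈ s, D x = 0) : ∀ x ∈ Subring.closure s, D x = 0 := by
  have h0 : D 0 = 0 := by simpa using hadd 0 0
  intro x hx
  induction hx using Subring.closure_induction with
  | mem x hx => exact hs x hx
  | zero => exact h0
  | one => simpa using hmul 1 1
  | add x y _ _ hx hy => rw [hadd, hx, hy, add_zero]
  | neg x _ hx =>
    have h := hadd x (-x)
    rwa [add_neg_cancel, h0, hx, zero_add, eq_comm] at h
  | mul x y _ _ hx hy => rw [hmul, hx, hy, mul_zero, zero_mul, add_zero]

namespace IsSkewBiderivation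

variable {R : Type*} [CommRing R] {br : R → R → R}

lemma add_right (hb : IsSkewBiderivation br) (a b c : R) : br a (b + c) = br a b + br a c := by
  rw [hb.skew, hb.add_left, hb.skew b a, hb.skew c a, neg_add, neg_neg, neg_neg]

lemma zero_right (hb : IsSkewBiderivation br) (a : R) : br a 0 = 0 := by
  simpa using hb.add_right a 0 0

lemma zero_left (hb : IsSkewBiderivation br) (a : R) : br 0 a = 0 := by
  rw [hb.skew, hb.zero_right, neg_zero]

lemma neg_right (hb : IsSkewBiderivation br) (a b : R) : br a (-b) = -br a b :=
  eq_neg_of_add_eq_zero_left <| by rw [← hb.add_right, neg_add_cancel, hb.zero_right]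

lemma one_left (hb : IsSkewBiderivation br) (a : R) : br 1 a = 0 := by
  have h : br a 1 = 0 := by simpa using hb.leibniz a 1 1
  rw [hb.skew, h, neg_zero]

lemma mul_left (hb : IsSkewBiderivation br) (a b c : R) :
    br (a * b) c = br a c * b + a * br b c := by
  rw [hb.skew, hb.leibniz, hb.skew c a, hb.skew c b]; ring

lemma add {br' : R → R → R} (hb : IsSkewBiderivation br) (hb' : IsSkewBiderivation br') :
    IsSkewBiderivation fun a b => br a b + br' a b where
  add_left a b c := by rw [hb.add_left, hb'.add_left]; ring
  skew a b := by rw [hb.skew, hb'.skew]; ring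
  leibniz a b c := by rw [hb.leibniz, hb'.leibniz]; ring

lemma jacobiator_add_right (hb : IsSkewBiderivation br) (a b c d : R) :
    jacobiator br a b (c + d) = jacobiator br a b c + jacobiator br a b d := by
  simp only [jacobiator, hb.add_right, hb.add_left]; ring

lemma jacobiator_mul_right (hb : IsSkewBiderivation br) (a b c d : R) :
    jacobiator br a b (c * d) = jacobiator br a b c * d + c * jacobiator br a b d := by
  simp only [jacobiator, hb.leibniz, hb.mul_left, hb.add_right]
  rw [hb.skew c a, hb.skew d a]
  ring

-- Skew-symmetry alone does not give `br a a = 0` in characteristic `2`.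
lemma jacobiator_self_left (hb : IsSkewBiderivation br) {a : R} (h : br a a = 0) (c : R) :
    jacobiator br a a c = 0 := by
  rw [jacobiator, hb.skew c a, hb.neg_right, h, hb.zero_right]; ring

lemma jacobiator_eq_zero_of_closure_eq_top (hb : IsSkewBiderivation br) {s : Set R}
    (hs : Subring.closure s = ⊤) (h : ∀ x ∈ s, ∀ y ∈ s, ∀ z ∈ s, jacobiator br x y z = 0)
    (a b c : R) : jacobiator br a b c = 0 := by
  have vanish : ∀ {D : R → R}, (∀ x y, D (x + y) = D x + D y) →
      (∀ x y, D (x * y) = D x * y + x * D y) → (∀ x ∈ s, D x = 0) → ∀ x, D x = 0 :=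
    fun hadd hmul h0 x => eq_zero_on_closure_of_leibniz hadd hmul h0 x (hs ▸ Subring.mem_top x)
  have h_two_gens : ∀ x ∈ s, ∀ y ∈ s, ∀ z, jacobiator br x y z = 0 := fun x hx y hy =>
    vanish (hb.jacobiator_add_right x y) (hb.jacobiator_mul_right x y) (h x hx y hy)
  have h_one_gen : ∀ x ∈ s, ∀ y z, jacobiator br x y z = 0 := fun x hx y z => by
    rw [jacobiator_cyclic, jacobiator_cyclic]
    exact vanish (hb.jacobiator_add_right z x) (hb.jacobiator_mul_right z x)
      (fun y hy => by rw [jacobiator_cyclic, h_two_gens x hx y hy]) y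
  rw [jacobiator_cyclic]
  exact vanish (hb.jacobiator_add_right b c) (hb.jacobiator_mul_right b c)
    (fun x hx => by rw [← jacobiator_cyclic, h_one_gen x hx]) a

end IsSkewBiderivation

lemma PoissonStructure.isSkewBiderivation {K A : Type*} [CommRing K] [CommRing A] [Algebra K A]
    (P : PoissonStructure K A) : IsSkewBiderivation P.br :=
  ⟨P.add_left, P.skew, P.leibniz⟩

namespace Derivation

variable {K R : Type*} [CommRing K] [CommRing R] [Algebra K R]

lemma isSkewBiderivation_wedge (D E : Derivation K R R) :
    IsSkewBiderivation fun p q => D p * E q - D q * E p where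
  add_left a b c := by simp only [map_add]; ring
  skew a b := by ring
  leibniz a b c := by simp only [leibniz, smul_eq_mul]; ring

lemma wedge_smul_left (D E : Derivation K R R) (k : K) (p q : R) :
    D (k • p) * E q - D q * E (k • p) = k • (D p * E q - D q * E p) := by
  simp only [map_smul, smul_mul_assoc, mul_smul_comm, smul_sub]

end Derivation

namespace Polynomial

variable {A : Type*} [CommRing A]

lemma C_mul_X_add_C_inj {a b c d : A} : C a * X + C b = C c * X + C d ↔ a = c ∧ b = d := by
  refine ⟨fun h => ⟨?_, ?_⟩, fun ⟨hac, hbd⟩ => hac ▸ hbd ▸ rfl⟩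
  · simpa using congrArg (coeff · 1) h
  · simpa using congrArg (coeff · 0) h

lemma closure_range_C_union_X : Subring.closure (Set.range (C : A → A[X]) ∪ {X}) = ⊤ := by
  rw [← algebraMap_eq, ← Algebra.adjoin_eq_ring_closure, adjoin_X, Algebra.top_toSubring]

noncomputable def coeffBracket (br : A → A → A) (p q : A[X]) : A[X] :=
  p.sum fun i a => q.sum fun j b => monomial (i + j) (br a b)

section coeffBracket

variable {br : A → A → A}

lemma coeffBracket_monomial (hb : IsSkewBiderivation br) (i j : ℕ) (a b : A) :
    coeffBracket br (monomial i a) (monomial j b) = monomial (i + j) (br a b) := by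
  rw [coeffBracket, sum_monomial_index, sum_monomial_index] <;>
    simp [hb.zero_left, hb.zero_right]

lemma coeffBracket_add_left (hb : IsSkewBiderivation br) (p q r : A[X]) :
    coeffBracket br (p + q) r = coeffBracket br p r + coeffBracket br q r := by
  refine sum_add_index _ _ _ (fun i => ?_) fun i a b => ?_
  · simp [sum_def, hb.zero_left]
  · simp only [hb.add_left, map_add, ← sum_add]

lemma coeffBracket_add_right (hb : IsSkewBiderivation br) (p q r : A[X]) :
    coeffBracket br p (q + r) = coeffBracket br p q + coeffBracket br p r := by
  simp only [coeffBracket, ← sum_add]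
  refine congrArg p.sum (funext₂ fun i a => sum_add_index _ _ _ (fun j => ?_) fun j b c => ?_)
  · simp [hb.zero_right]
  · simp only [hb.add_right, map_add]

lemma isSkewBiderivation_coeffBracket (hb : IsSkewBiderivation br) :
    IsSkewBiderivation (coeffBracket br) where
  add_left := coeffBracket_add_left hb
  skew p q := by
    induction p using Polynomial.induction_on' with
    | add p p' hp hp' => rw [coeffBracket_add_left hb, coeffBracket_add_right hb, hp, hp', neg_add]
    | monomial i a =>
      induction q using Polynomial.induction_on' with
      | add q q' hq hq' =>
        rw [coeffBracket_add_left hb, coeffBracket_add_right hb, hq, hq', neg_add]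
      | monomial j b => rw [coeffBracket_monomial hb, coeffBracket_monomial hb, hb.skew, map_neg,
          add_comm]
  leibniz p q r := by
    induction p using Polynomial.induction_on' with
    | add p p' hp hp' => simp only [coeffBracket_add_left hb, hp, hp']; ring
    | monomial i a =>
      induction q using Polynomial.induction_on' with
      | add q q' hq hq' => simp only [add_mul, coeffBracket_add_right hb, hq, hq']; ring
      | monomial j b =>
        induction r using Polynomial.induction_on' with
        | add r r' hr hr' => simp only [mul_add, coeffBracket_add_right hb, hr, hr']; ring
        | monomial k c =>
          simp only [monomial_mul_monomial, coeffBracket_monomial hb, hb.leibniz, map_add]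
          ring_nf

lemma coeffBracket_smul_left {K : Type*} [CommRing K] [Algebra K A] (hb : IsSkewBiderivation br)
    (hsmul : ∀ (k : K) (a b : A), br (k • a) b = k • br a b) (k : K) (p q : A[X]) :
    coeffBracket br (k • p) q = k • coeffBracket br p q := by
  induction p using Polynomial.induction_on' with
  | add p p' hp hp' => rw [smul_add, coeffBracket_add_left hb, hp, hp', coeffBracket_add_left hb,
      smul_add]
  | monomial i a =>
    induction q using Polynomial.induction_on' with
    | add q q' hq hq' => rw [coeffBracket_add_right hb, hq, hq', coeffBracket_add_right hb,
        smul_add]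
    | monomial j b => rw [smul_monomial, coeffBracket_monomial hb, coeffBracket_monomial hb, hsmul,
        smul_monomial]

lemma coeffBracket_C_C (hb : IsSkewBiderivation br) (a b : A) :
    coeffBracket br (C a) (C b) = C (br a b) := by
  simp only [← monomial_zero_left, coeffBracket_monomial hb]

lemma coeffBracket_X_left (hb : IsSkewBiderivation br) (q : A[X]) : coeffBracket br X q = 0 := by
  induction q using Polynomial.induction_on' with
  | add q q' hq hq' => rw [coeffBracket_add_right hb, hq, hq', add_zero]
  | monomial j b => rw [← monomial_one_one_eq_X, coeffBracket_monomial hb, hb.one_left, map_zero]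

end coeffBracket

end Polynomial

namespace Derivation

variable {K A : Type*} [CommRing K] [CommRing A] [Algebra K A]

noncomputable def ofLeibniz (f : A →ₗ[K] A) (h : ∀ a b, f (a * b) = f a * b + a * f b) :
    Derivation K A A :=
  mk' f fun a b => by rw [h, smul_eq_mul, smul_eq_mul, add_comm, mul_comm (f a)]

noncomputable def coeffwise (d : Derivation K A A) : Derivation K A[X] A[X] :=
  PolynomialModule.equivPolynomialSelf.compDer d.mapCoeffs

lemma coeffwise_C (d : Derivation K A A) (a : A) : d.coeffwise (C a) = C (d a) := by
  simp [coeffwise, PolynomialModule.equivPolynomialSelf_apply_eq]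

end Derivation

namespace Polynomial

variable {K A : Type*} [CommRing K] [CommRing A] [Algebra K A]

noncomputable def oreDerivation (α δ : Derivation K A A) : Derivation K A[X] A[X] :=
  (X : A[X]) • α.coeffwise + δ.coeffwise

lemma oreDerivation_C (α δ : Derivation K A A) (a : A) :
    oreDerivation α δ (C a) = C (α a) * X + C (δ a) := by
  rw [oreDerivation, Derivation.add_apply, Derivation.smul_apply, Derivation.coeffwise_C,
    Derivation.coeffwise_C, smul_eq_mul, mul_comm]

noncomputable def oreBracket (br : A → A → A) (D : Derivation K A[X] A[X]) (p q : A[X]) : A[X] :=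
  coeffBracket br p q + (derivative p * D q - derivative q * D p)

section oreBracket

variable {br : A → A → A}

lemma isSkewBiderivation_oreBracket (hb : IsSkewBiderivation br) (D : Derivation K A[X] A[X]) :
    IsSkewBiderivation (oreBracket br D) :=
  (isSkewBiderivation_coeffBracket hb).add
    (((derivative' (R := A)).restrictScalars K).isSkewBiderivation_wedge D)

lemma oreBracket_smul_left (hb : IsSkewBiderivation br)
    (hsmul : ∀ (k : K) (a b : A), br (k • a) b = k • br a b) (D : Derivation K A[X] A[X])
    (k : K) (p q : A[X]) : oreBracket br D (k • p) q = k • oreBracket br D p q := by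
  rw [oreBracket, oreBracket, coeffBracket_smul_left hb hsmul, smul_add]
  congr 1
  exact ((derivative' (R := A)).restrictScalars K).wedge_smul_left D k p q

lemma oreBracket_C_C (hb : IsSkewBiderivation br) (D : Derivation K A[X] A[X]) (a b : A) :
    oreBracket br D (C a) (C b) = C (br a b) := by
  simp [oreBracket, coeffBracket_C_C hb]

lemma oreBracket_X_C (hb : IsSkewBiderivation br) (D : Derivation K A[X] A[X]) (a : A) :
    oreBracket br D X (C a) = D (C a) := by
  simp [oreBracket, coeffBracket_X_left hb]

lemma oreBracket_X_X (hb : IsSkewBiderivation br) (D : Derivation K A[X] A[X]) :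
    oreBracket br D X X = 0 := by
  simp [oreBracket, coeffBracket_X_left hb]

end oreBracket

section bracketWithX

variable {br : A → A → A} {Q : A[X] → A[X] → A[X]} {α δ : A → A}

lemma leibniz_of_bracket_X_C (hQ : IsSkewBiderivation Q)
    (hX : ∀ a, Q X (C a) = C (α a) * X + C (δ a)) (a b : A) :
    α (a * b) = α a * b + a * α b ∧ δ (a * b) = δ a * b + a * δ b := by
  have h := hQ.leibniz X (C a) (C b)
  rw [← C_mul, hX, hX, hX] at h
  refine C_mul_X_add_C_inj.mp (h.trans ?_)
  simp only [map_add, map_mul]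
  ring

lemma jacobiator_C_C_C (hC : ∀ a b, Q (C a) (C b) = C (br a b)) (a b c : A) :
    jacobiator Q (C a) (C b) (C c) = C (jacobiator br a b c) := by
  simp only [jacobiator, hC, map_add]

lemma jacobiator_X_C_C (hb : IsSkewBiderivation br) (hQ : IsSkewBiderivation Q)
    (hC : ∀ a b, Q (C a) (C b) = C (br a b)) (hX : ∀ a, Q X (C a) = C (α a) * X + C (δ a))
    (a b : A) :
    jacobiator Q X (C a) (C b) =
      C (α (br a b) - (br (α a) b + br a (α b))) * X +
        C (δ (br a b) - (br (δ a) b + br a (δ b) + α a * δ b - δ a * α b)) := by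
  have hCX : ∀ c, Q (C c) X = -(C (α c) * X + C (δ c)) := fun c => by rw [hQ.skew, hX]
  have hC_linear : ∀ c u v, Q (C c) (C u * X + C v) =
      C (br c u) * X - C u * (C (α c) * X + C (δ c)) + C (br c v) := fun c u v => by
    rw [hQ.add_right, hQ.leibniz, hC, hCX, hC]; ring
  simp only [jacobiator, hC, hX, hCX, hQ.neg_right, hC_linear]
  rw [hb.skew b (α a), hb.skew b (δ a)]
  simp only [map_add, map_sub, map_mul, map_neg]
  ring

lemma jacobiator_X_C_C_eq_zero_iff (hb : IsSkewBiderivation br) (hQ : IsSkewBiderivation Q)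
    (hC : ∀ a b, Q (C a) (C b) = C (br a b)) (hX : ∀ a, Q X (C a) = C (α a) * X + C (δ a))
    (a b : A) :
    jacobiator Q X (C a) (C b) = 0 ↔ α (br a b) = br (α a) b + br a (α b) ∧
      δ (br a b) = br (δ a) b + br a (δ b) + α a * δ b - δ a * α b := by
  rw [jacobiator_X_C_C hb hQ hC hX, show (0 : A[X]) = C 0 * X + C 0 by simp, C_mul_X_add_C_inj,
    sub_eq_zero, sub_eq_zero]

end bracketWithX

lemma jacobiator_oreBracket_eq_zero (P : PoissonStructure K A) (α δ : Derivation K A A)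
    (hα : ∀ a b, α (P.br a b) = P.br (α a) b + P.br a (α b))
    (hδ : ∀ a b, δ (P.br a b) = P.br (δ a) b + P.br a (δ b) + α a * δ b - δ a * α b)
    (p q r : A[X]) : jacobiator (oreBracket P.br (oreDerivation α δ)) p q r = 0 := by
  have hb := P.isSkewBiderivation
  have hQ := isSkewBiderivation_oreBracket hb (oreDerivation α δ)
  have hC := oreBracket_C_C hb (oreDerivation α δ)
  have hX : ∀ a, oreBracket P.br (oreDerivation α δ) X (C a) = C (α a) * X + C (δ a) :=
    fun a => (oreBracket_X_C hb _ a).trans (oreDerivation_C α δ a)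
  have hXCC : ∀ a b, jacobiator (oreBracket P.br (oreDerivation α δ)) X (C a) (C b) = 0 :=
    fun a b => (jacobiator_X_C_C_eq_zero_iff hb hQ hC hX a b).mpr ⟨hα a b, hδ a b⟩
  have hXX := hQ.jacobiator_self_left (oreBracket_X_X hb (oreDerivation α δ))
  refine hQ.jacobiator_eq_zero_of_closure_eq_top closure_range_C_union_X ?_ p q r
  rintro _ (⟨a, rfl⟩ | rfl) _ (⟨b, rfl⟩ | rfl) _ (⟨c, rfl⟩ | rfl)
  · rw [jacobiator_C_C_C hC, jacobiator, P.jacobi, map_zero]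
  · rw [← jacobiator_cyclic, hXCC]
  · rw [jacobiator_cyclic, hXCC]
  · rw [jacobiator_cyclic, hXX]
  · exact hXCC b c
  · rw [← jacobiator_cyclic, hXX]
  · exact hXX (C c)
  · exact hXX X

end Polynomial

noncomputable def PoissonStructure.polynomialExtension {K A : Type*} [CommRing K] [CommRing A]
    [Algebra K A] (P : PoissonStructure K A) (α δ : A →ₗ[K] A) (hα : IsPoissonDer P α)
    (hδ : IsPoissonAlphaDer P α δ) : PoissonStructure K A[X] where
  br := oreBracket P.br (oreDerivation (.ofLeibniz α hα.1) (.ofLeibniz δ hδ.1))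
  add_left := (isSkewBiderivation_oreBracket P.isSkewBiderivation _).add_left
  smul_left := oreBracket_smul_left P.isSkewBiderivation P.smul_left _
  skew := (isSkewBiderivation_oreBracket P.isSkewBiderivation _).skew
  leibniz := (isSkewBiderivation_oreBracket P.isSkewBiderivation _).leibniz
  jacobi := jacobiator_oreBracket_eq_zero P _ _ hα.2 hδ.2

/-- Oh's theorem: the polynomial ring `A[X]` carries a Poisson bracket extending that
of `A` with `{X, a} = α(a)X + δ(a)` if and only if `α` is a Poisson derivation and
`δ` is a Poisson `α`-derivation. -/
theorem stmt2 {K A : Type*} [Field K] [CommRing A] [Algebra K A]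
    (P : PoissonStructure K A) (α δ : A →ₗ[K] A) :
    (∃ Q : PoissonStructure K (Polynomial A),
      (∀ a b : A, Q.br (Polynomial.C a) (Polynomial.C b) = Polynomial.C (P.br a b)) ∧
      (∀ a : A, Q.br Polynomial.X (Polynomial.C a) =
          Polynomial.C (α a) * Polynomial.X + Polynomial.C (δ a))) ↔
    (IsPoissonDer P α ∧ IsPoissonAlphaDer P α δ) := by
  constructor
  · rintro ⟨Q, hC, hX⟩
    have hmul := leibniz_of_bracket_X_C Q.isSkewBiderivation hX
    have hpoisson a b := (jacobiator_X_C_C_eq_zero_iff P.isSkewBiderivation Q.isSkewBiderivation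
      hC hX a b).mp (Q.jacobi X (C a) (C b))
    exact ⟨⟨fun a b => (hmul a b).1, fun a b => (hpoisson a b).1⟩,
      fun a b => (hmul a b).2, fun a b => (hpoisson a b).2⟩
  · rintro ⟨hα, hδ⟩
    let D := oreDerivation (.ofLeibniz α hα.1) (.ofLeibniz δ hδ.1)
    exact ⟨P.polynomialExtension α δ hα hδ, oreBracket_C_C P.isSkewBiderivation D,
      fun a => (oreBracket_X_C P.isSkewBiderivation D a).trans (oreDerivation_C _ _ a)⟩
end

section
/- Let A be a Poisson K-algebra, α a Poisson derivation of A, and (D_i)_{i≥0} a sequence of K-linear maps with D_0 = id_A. Then (D_i) is a higher α-skew Poisson derivation on A if and only if the map Ψ : A → A[[X; −α]]_P defined by Ψ(a) = Σ_{i≥0} D_i(a) X^i is a homomorphism of Poisson algebras. -/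
/-- The Poisson bracket on the power series ring `A[[X; β]]_P`, where `{X, a} = β(a) X`:
`{Σ aᵢXⁱ, Σ bⱼXʲ} = Σₙ (Σ_{i+j=n} ({aᵢ,bⱼ} + i aᵢ β(bⱼ) − j β(aᵢ) bⱼ)) Xⁿ`. -/
noncomputable def psBr {K A : Type*} [CommRing K] [CommRing A] [Algebra K A]
    (P : PoissonStructure K A) (β : A → A) (f g : PowerSeries A) : PowerSeries A :=
  PowerSeries.mk fun n => ∑ ij ∈ Finset.HasAntidiagonal.antidiagonal n,
    (P.br (PowerSeries.coeff (R := A) ij.1 f) (PowerSeries.coeff (R := A) ij.2 g)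
      + ij.1 • (PowerSeries.coeff (R := A) ij.1 f * β (PowerSeries.coeff (R := A) ij.2 g))
      - ij.2 • (β (PowerSeries.coeff (R := A) ij.1 f) * PowerSeries.coeff (R := A) ij.2 g))


/-!
Comparing coefficients of `Xⁿ`, multiplicativity of `Ψ` is the higher Leibniz rule and
`Ψ {a, b} = {Ψ a, Ψ b}` is the skew Poisson rule; for the latter, the term `j β(aᵢ) bⱼ` of the
bracket is reindexed along `i ↔ n - i`. The condition `Ψ 1 = 1` comes for free: `Ψ 1` is an
idempotent whose constant coefficient `D₀ 1 = 1` is a unit.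
-/

open PowerSeries Finset

lemma PowerSeries.coeff_mul_eq_sum_range {A : Type*} [CommSemiring A] (n : ℕ) (f g : A⟦X⟧) :
    coeff n (f * g) = ∑ i ∈ range (n + 1), coeff i f * coeff (n - i) g := by
  rw [coeff_mul, Nat.sum_antidiagonal_eq_sum_range_succ_mk]

lemma coeff_psBr {K A : Type*} [CommRing K] [CommRing A] [Algebra K A]
    (P : PoissonStructure K A) (β : A → A) (f g : A⟦X⟧) (n : ℕ) :
    coeff n (psBr P β f g) = ∑ i ∈ range (n + 1),
      (P.br (coeff i f) (coeff (n - i) g)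
        + i • (coeff i f * β (coeff (n - i) g) - β (coeff (n - i) f) * coeff i g)) := by
  have hswap : ∑ ij ∈ antidiagonal n, ij.2 • (β (coeff ij.1 f) * coeff ij.2 g)
      = ∑ ij ∈ antidiagonal n, ij.1 • (β (coeff ij.2 f) * coeff ij.1 g) :=
    (Nat.sum_antidiagonal_swap (f := fun ij => ij.2 • (β (coeff ij.1 f) * coeff ij.2 g))).symm
  rw [psBr, coeff_mk, sum_sub_distrib, sum_add_distrib, hswap]
  simp only [Nat.sum_antidiagonal_eq_sum_range_succ_mk, smul_sub, sum_add_distrib,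
    sum_sub_distrib, add_sub_assoc]

theorem stmt3_general {K A : Type*} [Field K] [CommRing A] [Algebra K A]
    (P : PoissonStructure K A) (α : A →ₗ[K] A)
    (D : ℕ → A →ₗ[K] A) (hD0 : D 0 = LinearMap.id) :
    letI Ψ : A → PowerSeries A := fun a => PowerSeries.mk fun i => D i a
    ((∀ (n : ℕ) (a b : A),
        D n (a * b) = ∑ i ∈ Finset.range (n + 1), D i a * D (n - i) b) ∧
      (∀ (n : ℕ) (a b : A),
        D n (P.br a b) = ∑ i ∈ Finset.range (n + 1),
          (P.br (D i a) (D (n - i) b)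
            + i • (α (D (n - i) a) * D i b - D i a * α (D (n - i) b))))) ↔
    ((∀ a b : A, Ψ (a * b) = Ψ a * Ψ b) ∧ Ψ 1 = 1 ∧
      (∀ a b : A, Ψ (P.br a b) = psBr P (fun x => - α x) (Ψ a) (Ψ b))) := by
  set Ψ : A → A⟦X⟧ := fun a => PowerSeries.mk fun i => D i a
  have mul_iff : (∀ (n : ℕ) (a b : A),
        D n (a * b) = ∑ i ∈ range (n + 1), D i a * D (n - i) b) ↔
      ∀ a b : A, Ψ (a * b) = Ψ a * Ψ b := by
    simp only [Ψ, PowerSeries.ext_iff, coeff_mul_eq_sum_range, coeff_mk]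
    exact ⟨fun h a b n => h n a b, fun h n a b => h a b n⟩
  have br_iff : (∀ (n : ℕ) (a b : A),
        D n (P.br a b) = ∑ i ∈ range (n + 1),
          (P.br (D i a) (D (n - i) b)
            + i • (α (D (n - i) a) * D i b - D i a * α (D (n - i) b)))) ↔
      ∀ a b : A, Ψ (P.br a b) = psBr P (fun x => - α x) (Ψ a) (Ψ b) := by
    simp only [Ψ, PowerSeries.ext_iff, coeff_psBr, coeff_mk, mul_neg, neg_mul, sub_neg_eq_add,
      neg_add_eq_sub]
    exact ⟨fun h a b n => h n a b, fun h n a b => h a b n⟩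
  have one_of_mul (hmul : ∀ a b : A, Ψ (a * b) = Ψ a * Ψ b) : Ψ 1 = 1 := by
    have idem : IsIdempotentElem (Ψ 1) := by rw [IsIdempotentElem, ← hmul, one_mul]
    refine (IsIdempotentElem.iff_eq_one_of_isUnit ?_).mp idem
    simp [Ψ, isUnit_iff_constantCoeff, ← coeff_zero_eq_constantCoeff_apply, hD0]
  rw [mul_iff, br_iff]
  exact ⟨fun ⟨hmul, hbr⟩ => ⟨hmul, one_of_mul hmul, hbr⟩, fun ⟨hmul, _, hbr⟩ => ⟨hmul, hbr⟩⟩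

/-- `(D_i)` (with `D 0 = id`) is a higher `α`-skew Poisson derivation if and only if
`Ψ : a ↦ Σ D_i(a) Xⁱ` is a Poisson algebra homomorphism `A → A[[X; −α]]_P`. -/
theorem stmt3 {K A : Type*} [Field K] [CommRing A] [Algebra K A]
    (P : PoissonStructure K A) (α : A →ₗ[K] A) (hα : IsPoissonDer P α)
    (D : ℕ → A →ₗ[K] A) (hD0 : D 0 = LinearMap.id) :
    letI Ψ : A → PowerSeries A := fun a => PowerSeries.mk fun i => D i a
    ((∀ (n : ℕ) (a b : A),
        D n (a * b) = ∑ i ∈ Finset.range (n + 1), D i a * D (n - i) b) ∧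
      (∀ (n : ℕ) (a b : A),
        D n (P.br a b) = ∑ i ∈ Finset.range (n + 1),
          (P.br (D i a) (D (n - i) b)
            + i • (α (D (n - i) a) * D i b - D i a * α (D (n - i) b))))) ↔
    ((∀ a b : A, Ψ (a * b) = Ψ a * Ψ b) ∧ Ψ 1 = 1 ∧
      (∀ a b : A, Ψ (P.br a b) = psBr P (fun x => - α x) (Ψ a) (Ψ b))) :=
  stmt3_general P α D hD0
end

section
/- Let A be a commutative K-algebra generated by a finite set {a_1,…,a_k} and (D_i) a higher derivation on A. If (D_i) is locally nilpotent on each a_j (i.e., for each j there is n with D_i(a_j) = 0 for all i ≥ n), then (D_i) is locally nilpotent on A (for each a ∈ A there is n with D_i(a) = 0 for all i ≥ n). -/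
/-!
The elements on which `D` is locally nilpotent form a subalgebra: closure under sums is clear,
and if `D` kills `x` from order `n` on and `y` from order `m` on, every term `D j x * D (i - j) y`
of the Leibniz expansion of `D i (x * y)` vanishes once `i ≥ n + m`. A subalgebra containing the
generators is everything.
-/

open Finset

section HigherDerivation

variable {K A : Type*} [CommSemiring K] [Ring A] [Algebra K A] {D : ℕ → A →ₗ[K] A}

theorem higherDeriv_apply_one_eq_zero (hD0 : D 0 1 = 1)
    (hD1 : ∀ (n : ℕ) (a b : A), D n (a * b) = ∑ i ∈ range (n + 1), D i a * D (n - i) b) :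
    ∀ n, 0 < n → D n 1 = 0 := by
  intro n
  induction n using Nat.strong_induction_on with
  | _ n ih =>
    intro hn
    have hsum : ∑ i ∈ range n, D i 1 * D (n - i) 1 = D n 1 := by
      rw [sum_eq_single 0
        (fun i hi hi0 => by rw [ih i (mem_range.mp hi) (Nat.pos_of_ne_zero hi0), zero_mul])
        (fun h0 => absurd (mem_range.mpr hn) h0)]
      rw [hD0, one_mul, Nat.sub_zero]
    have hDn := hD1 n 1 1
    rw [mul_one, sum_range_succ, hsum, Nat.sub_self, hD0, mul_one] at hDn
    exact left_eq_add.mp hDn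

theorem higherDeriv_mul_eq_zero_of_le
    (hD1 : ∀ (n : ℕ) (a b : A), D n (a * b) = ∑ i ∈ range (n + 1), D i a * D (n - i) b)
    {x y : A} {n m : ℕ} (hx : ∀ i ≥ n, D i x = 0) (hy : ∀ i ≥ m, D i y = 0) :
    ∀ i ≥ n + m, D i (x * y) = 0 := by
  intro i hi
  rw [hD1]
  refine sum_eq_zero fun j hj => ?_
  rcases le_or_gt n j with hnj | hjn
  · rw [hx j hnj, zero_mul]
  · rw [hy (i - j) (by omega), mul_zero]

variable (D) in
def locallyNilpotentSubalgebra (hD0 : D 0 1 = 1)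
    (hD1 : ∀ (n : ℕ) (a b : A), D n (a * b) = ∑ i ∈ range (n + 1), D i a * D (n - i) b) :
    Subalgebra K A where
  carrier := {a | ∃ n, ∀ i ≥ n, D i a = 0}
  mul_mem' := fun ⟨n, hx⟩ ⟨m, hy⟩ => ⟨n + m, higherDeriv_mul_eq_zero_of_le hD1 hx hy⟩
  add_mem' := fun ⟨n, hx⟩ ⟨m, hy⟩ => ⟨max n m, fun i hi => by
    rw [map_add, hx i (le_of_max_le_left hi), hy i (le_of_max_le_right hi), add_zero]⟩
  algebraMap_mem' r := ⟨1, fun i hi => by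
    rw [Algebra.algebraMap_eq_smul_one, map_smul, higherDeriv_apply_one_eq_zero hD0 hD1 i hi,
      smul_zero]⟩

end HigherDerivation

/-- If a higher derivation on a finitely generated commutative `K`-algebra `A` is
locally nilpotent on each generator, then it is locally nilpotent on all of `A`. -/
theorem stmt7 {K A : Type*} [Field K] [CommRing A] [Algebra K A]
    (D : ℕ → A →ₗ[K] A)
    (hD0 : D 0 = LinearMap.id)
    (hD1 : ∀ (n : ℕ) (a b : A),
      D n (a * b) = ∑ i ∈ Finset.range (n + 1), D i a * D (n - i) b)
    (s : Finset A) (hgen : Algebra.adjoin K (s : Set A) = ⊤)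
    (hln : ∀ a ∈ s, ∃ n : ℕ, ∀ i ≥ n, D i a = 0) :
    ∀ a : A, ∃ n : ℕ, ∀ i ≥ n, D i a = 0 := by
  have hD0_one : D 0 1 = 1 := by rw [hD0, LinearMap.id_apply]
  intro a
  have ha : a ∈ Algebra.adjoin K (s : Set A) := hgen ▸ Algebra.mem_top
  exact Algebra.adjoin_le (S := locallyNilpotentSubalgebra D hD0_one hD1) hln ha
end

section
/- In the setting of the Poisson deleting derivation isomorphism F : A[Y^{±1}; α]_P → A[X^{±1}; α, δ]_P, suppose a group H acts by Poisson automorphisms with h(X) = μX, h(Y) = μY for μ ∈ K^×, h(A) = A, h commutes with α, and h(D_n(a_i)) = μ^n D_n(h(a_i)) for a generating set {a_1,…,a_l} of A and all n ≥ 0. Then F is H-equivariant: h_X ∘ F = F ∘ h_Y. -/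
/-!
Both `h_X ∘ F` and `F ∘ h_Y` are algebra maps, so it suffices to compare them on `C a` and on
the powers of `X`. The twisted commutation `h ∘ Dₙ = μⁿ Dₙ ∘ h` spreads from the generators to
all of `A`, since by the higher Leibniz rule and `μ^i μ^(n-i) = μ^n` both sides respect products.
In `h_X (F a) = Σᵢ η⁻ⁱ h(Dᵢ a) (μX)⁻ⁱ` the factor `μ⁻ⁱ` then cancels the `μⁱ` of `h(Dᵢ a)`.
-/

open LaurentPolynomial

/-- The deleting derivation map `F(a) = Σᵢ η⁻ⁱ Dᵢ(a) X⁻ⁱ`. -/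
noncomputable def Fmap {K A : Type*} [Field K] [CommRing A] [Algebra K A]
    (η : K) (D : ℕ → A →ₗ[K] A) (a : A) : LaurentPolynomial A :=
  ∑ᶠ i : ℕ, (η ^ i)⁻¹ • (LaurentPolynomial.C (D i a) * T (-(i : ℤ)))

structure IsHigherDerivation {K A : Type*} [CommRing K] [CommRing A] [Algebra K A]
    (D : ℕ → A →ₗ[K] A) : Prop where
  apply_zero : D 0 = LinearMap.id
  leibniz : ∀ (n : ℕ) (a b : A), D n (a * b) = ∑ i ∈ Finset.range (n + 1), D i a * D (n - i) b

namespace IsHigherDerivation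

variable {K A : Type*} [CommRing K] [CommRing A] [Algebra K A] {D : ℕ → A →ₗ[K] A}

theorem map_one_eq_zero (hD : IsHigherDerivation D) {n : ℕ} (hn : n ≠ 0) : D n 1 = 0 := by
  induction n using Nat.strong_induction_on with
  | _ n ih =>
    have hsplit := hD.leibniz n 1 1
    rw [mul_one, Finset.sum_range_succ, Nat.sub_self, hD.apply_zero, LinearMap.id_apply, mul_one,
      Finset.sum_eq_single_of_mem 0 (Finset.mem_range.mpr (Nat.pos_of_ne_zero hn))] at hsplit
    · simpa [hD.apply_zero] using hsplit
    · intro i hi hi0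
      rw [ih i (Finset.mem_range.mp hi) hi0, zero_mul]

theorem map_algebraMap_eq_zero (hD : IsHigherDerivation D) {n : ℕ} (hn : n ≠ 0) (r : K) :
    D n (algebraMap K A r) = 0 := by
  rw [Algebra.algebraMap_eq_smul_one, map_smul, hD.map_one_eq_zero hn, smul_zero]

theorem map_apply_of_adjoin_eq_top (hD : IsHigherDerivation D) (g : A →ₐ[K] A) (μ : K)
    {s : Set A} (hs : Algebra.adjoin K s = ⊤)
    (hgen : ∀ n, ∀ a ∈ s, g (D n a) = μ ^ n • D n (g a)) (n : ℕ) (a : A) :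
    g (D n a) = μ ^ n • D n (g a) := by
  have ha : a ∈ Algebra.adjoin K s := hs ▸ Algebra.mem_top
  induction ha using Algebra.adjoin_induction generalizing n with
  | mem x hx => exact hgen n x hx
  | algebraMap r =>
    rcases eq_or_ne n 0 with rfl | hn
    · simp [hD.apply_zero]
    · simp [hD.map_algebraMap_eq_zero hn]
  | add x y _ _ ihx ihy => simp only [map_add, ihx, ihy, smul_add]
  | mul x y _ _ ihx ihy =>
    rw [hD.leibniz, map_sum, map_mul, hD.leibniz, Finset.smul_sum]
    refine Finset.sum_congr rfl fun i hi => ?_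
    rw [map_mul, ihx, ihy, smul_mul_smul_comm, ← pow_add,
      Nat.add_sub_cancel' (Nat.lt_succ_iff.mp (Finset.mem_range.mp hi))]

end IsHigherDerivation

section LaurentAutomorphism

variable {K R : Type*} [Field K] [CommRing R] [Algebra K R]

theorem map_T_eq_zpow_smul {G : Type*} [FunLike G R[T;T⁻¹] R[T;T⁻¹]]
    [AlgHomClass G K R[T;T⁻¹] R[T;T⁻¹]] (g : G) {c : K} (hc : c ≠ 0)
    (hg : g (T 1) = c • T 1) (n : ℤ) : g (T n) = c ^ n • T n := by
  have hneg : g (T (-1)) = c⁻¹ • T (-1) := by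
    calc g (T (-1)) = g (T (-1)) * (g (T 1) * (c⁻¹ • T (-1))) := by
          rw [hg, smul_mul_smul_comm, ← T_add, mul_inv_cancel₀ hc]; simp [T_zero]
      _ = c⁻¹ • T (-1) := by rw [← mul_assoc, ← map_mul, ← T_add]; simp [T_zero]
  induction n using Int.induction_on with
  | zero => simp [T_zero]
  | succ k ih => rw [T_add, map_mul, ih, hg, smul_mul_smul_comm, ← T_add, zpow_add_one₀ hc]
  | pred k ih => rw [T_sub, map_mul, ih, hneg, smul_mul_smul_comm, ← T_sub, zpow_sub_one₀ hc]

theorem map_Fmap (g : R[T;T⁻¹] ≃ₐ[K] R[T;T⁻¹]) (φ : R → R) {μ : K} (hμ : μ ≠ 0)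
    (hgC : ∀ a, g (C a) = C (φ a)) (hgT : g (T 1) = μ • T 1) (η : K) (D : ℕ → R →ₗ[K] R)
    {a : R} (hφD : ∀ n, φ (D n a) = μ ^ n • D n (φ a)) :
    g (Fmap η D a) = Fmap η D (φ a) := by
  -- `g` is injective, so it commutes with `∑ᶠ` even when the support is infinite.
  rw [Fmap, AddEquivClass.map_finsum]
  refine finsum_congr fun i => ?_
  rw [map_smul, map_mul, hgC, hφD, map_T_eq_zpow_smul g hμ hgT, ← single_eq_C, ← single_eq_C,
    ← AddMonoidAlgebra.smul_single, smul_mul_smul_comm, zpow_neg, zpow_natCast,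
    mul_inv_cancel₀ (pow_ne_zero i hμ), one_smul]

end LaurentAutomorphism

theorem stmt10_general {K A : Type*} [Field K] [CommRing A] [Algebra K A]
    (η : K)
    (D : ℕ → A →ₗ[K] A) (hD0 : D 0 = LinearMap.id)
    (hD1 : ∀ (n : ℕ) (a b : A),
      D n (a * b) = ∑ i ∈ Finset.range (n + 1), D i a * D (n - i) b)
    -- a finite generating set of `A`
    (s : Finset A) (hgen : Algebra.adjoin K (s : Set A) = ⊤)
    -- the action of `h` on `A`, by Poisson automorphisms commuting with `α`
    (hA : A ≃ₐ[K] A)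
    (μ : K) (hμ : μ ≠ 0)
    -- the induced actions `h_X` and `h_Y` on the Laurent Poisson–Ore extensions
    (hX hY : LaurentPolynomial A ≃ₐ[K] LaurentPolynomial A)
    (hXC : ∀ a : A, hX (LaurentPolynomial.C a) = LaurentPolynomial.C (hA a))
    (hXT : hX (T 1) = μ • T 1)
    (hYC : ∀ a : A, hY (LaurentPolynomial.C a) = LaurentPolynomial.C (hA a))
    (hYT : hY (T 1) = μ • T 1)
    -- the equivariance assumption on generators
    (heq : ∀ (n : ℕ), ∀ a ∈ s, hA (D n a) = μ ^ n • D n (hA a))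
    -- the deleting derivation homomorphism `F`
    (F : LaurentPolynomial A →ₐ[K] LaurentPolynomial A)
    (hFC : ∀ a : A, F (LaurentPolynomial.C a) = Fmap η D a)
    (hFT : F (T 1) = T 1) :
    ∀ f : LaurentPolynomial A, hX (F f) = F (hY f) := by
  have hAD := IsHigherDerivation.map_apply_of_adjoin_eq_top ⟨hD0, hD1⟩ hA.toAlgHom μ hgen heq
  have hFTn : ∀ n, F (T n) = T n := fun n => by
    simpa using map_T_eq_zpow_smul F one_ne_zero (by rw [hFT, one_smul]) n
  intro f
  induction f using LaurentPolynomial.induction_on' with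
  | add p q hp hq => simp only [map_add, hp, hq]
  | C_mul_T n a =>
    calc hX (F (C a * T n)) = Fmap η D (hA a) * (μ ^ n • T n) := by
          rw [map_mul, map_mul, hFC, map_Fmap hX hA hμ hXC hXT η D (hAD · a), hFTn,
            map_T_eq_zpow_smul hX hμ hXT]
      _ = F (hY (C a * T n)) := by
          rw [map_mul, map_mul, hYC, map_T_eq_zpow_smul hY hμ hYT, hFC, map_smul, hFTn]

/-- `H`-equivariance of the Poisson deleting derivation homomorphism: if
`h` acts by Poisson automorphisms with `h(X) = μX`, `h(Y) = μY`, `h(A) = A`,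
`h` commutes with `α`, and `h(Dₙ(aᵢ)) = μⁿ Dₙ(h(aᵢ))` on a generating set of `A`,
then `h_X ∘ F = F ∘ h_Y`. -/
theorem stmt10 {K A : Type*} [Field K] [CommRing A] [Algebra K A]
    (P : PoissonStructure K A) (α δ : A →ₗ[K] A) (η : K) (hη : η ≠ 0)
    (hα : (∀ a b : A, α (a * b) = α a * b + a * α b) ∧
      ∀ a b : A, α (P.br a b) = P.br (α a) b + P.br a (α b))
    (D : ℕ → A →ₗ[K] A) (hD0 : D 0 = LinearMap.id) (hDδ : D 1 = δ)
    (hD1 : ∀ (n : ℕ) (a b : A),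
      D n (a * b) = ∑ i ∈ Finset.range (n + 1), D i a * D (n - i) b)
    (hA2 : ∀ (n : ℕ) (a b : A),
      D n (P.br a b) = ∑ i ∈ Finset.range (n + 1),
        (P.br (D i a) (D (n - i) b)
          + i • (α (D (n - i) a) * D i b - D i a * α (D (n - i) b))))
    (hA3 : ∀ (i : ℕ) (a : A), D i (α a) = α (D i a) + (i • η) • D i a)
    (hit : ∀ i j : ℕ, (D i).comp (D j) = ((i + j).choose i) • D (i + j))
    (hln : ∀ a : A, ∃ n : ℕ, ∀ i ≥ n, D i a = 0)
    -- a finite generating set of `A`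
    (s : Finset A) (hgen : Algebra.adjoin K (s : Set A) = ⊤)
    -- the action of `h` on `A`, by Poisson automorphisms commuting with `α`
    (hA : A ≃ₐ[K] A)
    (hAbr : ∀ a b : A, hA (P.br a b) = P.br (hA a) (hA b))
    (hAα : ∀ a : A, hA (α a) = α (hA a))
    (μ : K) (hμ : μ ≠ 0)
    -- the induced actions `h_X` and `h_Y` on the Laurent Poisson–Ore extensions
    (hX hY : LaurentPolynomial A ≃ₐ[K] LaurentPolynomial A)
    (hXC : ∀ a : A, hX (LaurentPolynomial.C a) = LaurentPolynomial.C (hA a))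
    (hXT : hX (T 1) = μ • T 1)
    (hYC : ∀ a : A, hY (LaurentPolynomial.C a) = LaurentPolynomial.C (hA a))
    (hYT : hY (T 1) = μ • T 1)
    -- the equivariance assumption on generators
    (heq : ∀ (n : ℕ), ∀ a ∈ s, hA (D n a) = μ ^ n • D n (hA a))
    -- the deleting derivation homomorphism `F`
    (F : LaurentPolynomial A →ₐ[K] LaurentPolynomial A)
    (hFC : ∀ a : A, F (LaurentPolynomial.C a) = Fmap η D a)
    (hFT : F (T 1) = T 1) :
    ∀ f : LaurentPolynomial A, hX (F f) = F (hY f) :=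
  stmt10_general η D hD0 hD1 s hgen hA μ hμ hX hY hXC hXT hYC hYT heq F hFC hFT
end

section
/- Let A be a Poisson K-algebra and R = A[X; α, δ]_P[Y^{±1}; β]_P an iterated Poisson-Ore extension with β(A) ⊆ A and β(X) = λX for λ ∈ K. Then R = A[Y^{±1}; β']_P[X; α', δ']_P, where β' = β|_A, α'|_A = α, δ'|_A = δ, α'(Y) = −λY and δ'(Y) = 0. Moreover if δα = αδ + ηδ on A, then δ'α' = α'δ' + ηδ' on A[Y^{±1}; β']_P. -/
/-!
The bracket `{X, -}` is a derivation of `R`, so on the powers of `Y` it acts through the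
logarithmic derivative of `Y`: from `{X, Y} = -λXY` one gets `{X, Yᵐ} = -mλXYᵐ` for every
`m : ℤ`. The Leibniz rule applied to `aYᵐ` then yields `α'` and `δ'`, and the commutation relation
for `δ'` and `α'` reduces to the one for `δ` and `α` coefficientwise.
-/

open LaurentPolynomial

namespace PoissonStructure

variable {K A : Type*} [CommRing K] [CommRing A] [Algebra K A] (P : PoissonStructure K A)

theorem br_add_right (a b c : A) : P.br a (b + c) = P.br a b + P.br a c := by
  rw [P.skew, P.add_left, neg_add, ← P.skew, ← P.skew]

theorem br_smul_right (k : K) (a b : A) : P.br a (k • b) = k • P.br a b := by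
  rw [P.skew, P.smul_left, ← smul_neg, ← P.skew]

def hamiltonian (a : A) : Derivation K A A :=
  Derivation.mk' ⟨⟨P.br a, P.br_add_right a⟩, fun k b => P.br_smul_right k a b⟩ fun b c => by
    simp only [LinearMap.coe_mk, AddHom.coe_mk, smul_eq_mul, P.leibniz]
    ring

@[simp]
theorem hamiltonian_apply (a b : A) : P.hamiltonian a b = P.br a b := rfl

end PoissonStructure

namespace Derivation

variable {K B : Type*} [CommRing K] [CommRing B] [Algebra K B]

theorem map_T_of_map_T_one (D : Derivation K B[T;T⁻¹] B[T;T⁻¹]) {r : B[T;T⁻¹]}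
    (h : D (T 1) = r * T 1) (m : ℤ) : D (T m) = (m • r) * T m := by
  induction m using Int.induction_on with
  | zero => simp [T_zero]
  | succ i ih =>
    rw [T_add, D.leibniz, ih, h, add_zsmul, one_zsmul, smul_eq_mul, smul_eq_mul]
    ring
  | pred i ih =>
    have hinv : T (-1) * T 1 = (1 : B[T;T⁻¹]) := by rw [← T_add]; simp [T_zero]
    have hD : D (T (-1)) = -r * T (-1) := by
      rw [D.leibniz_of_mul_eq_one hinv, h, smul_eq_mul]
      linear_combination (-r * T (-1)) * hinv
    rw [sub_eq_add_neg, T_add, D.leibniz, ih, hD, add_zsmul, neg_one_zsmul, smul_eq_mul,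
      smul_eq_mul]
    ring

end Derivation

theorem stmt11_general {K A : Type*} [Field K] [CommRing A] [Algebra K A]
    (α δ : A →ₗ[K] A) (lam η : K)
    (R : PoissonStructure K (LaurentPolynomial (Polynomial A)))
    (ι : A → LaurentPolynomial (Polynomial A))
    (hι : ι = fun a => LaurentPolynomial.C (Polynomial.C a))
    -- `R = A[X; α, δ]_P[Y^{±1}; β]_P`:
    (hRX : ∀ a : A, R.br (LaurentPolynomial.C Polynomial.X) (ι a)
        = ι (α a) * LaurentPolynomial.C Polynomial.X + ι (δ a))
    (hRYX : R.br (T 1) (LaurentPolynomial.C Polynomial.X)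
        = lam • (LaurentPolynomial.C Polynomial.X * T 1)) :
    -- (1) `{X, aYᵐ} = α'(aYᵐ)X + δ'(aYᵐ)` with `α'(aYᵐ) = (α(a) − mλa)Yᵐ`,
    --     `δ'(aYᵐ) = δ(a)Yᵐ`:
    (∀ (a : A) (m : ℤ),
      R.br (LaurentPolynomial.C Polynomial.X) (ι a * T m)
        = (ι (α a) - (m • lam) • ι a) * T m * LaurentPolynomial.C Polynomial.X
          + ι (δ a) * T m) ∧
    -- (2) if `δα = αδ + ηδ` on `A`, then `δ'α' = α'δ' + ηδ'` on `A[Y^{±1}; β']_P`: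
    ((∀ a : A, δ (α a) = α (δ a) + η • δ a) →
      ∀ (a : A) (m : ℤ),
        (ι (δ (α a)) - (m • lam) • ι (δ a)) * T m
          = ((ι (α (δ a)) - (m • lam) • ι (δ a)) * T m + η • (ι (δ a) * T m))) := by
  subst hι
  set X : LaurentPolynomial (Polynomial A) := LaurentPolynomial.C Polynomial.X
  have hXT (m : ℤ) : R.br X (T m) = (m • -(lam • X)) * T m := by
    refine (R.hamiltonian X).map_T_of_map_T_one ?_ m
    rw [R.hamiltonian_apply, R.skew, hRYX, neg_mul, smul_mul_assoc]
  refine ⟨fun a m => ?_, fun h a m => ?_⟩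
  · rw [R.leibniz, hRX, hXT]
    simp only [Algebra.smul_def, LaurentPolynomial.algebraMap_apply,
      Polynomial.algebraMap_apply, map_mul, eq_intCast, map_intCast]
    ring
  · simp only [h a, Algebra.smul_def, LaurentPolynomial.algebraMap_apply,
      Polynomial.algebraMap_apply, map_add, map_mul]
    ring

/-- Reordering the variables in the iterated Poisson–Ore extension
`R = A[X; α, δ]_P[Y^{±1}; β]_P` (with `β(A) ⊆ A`, `β(X) = λX`): one has
`R = A[Y^{±1}; β']_P[X; α', δ']_P` where `β' = β|_A`, `α'(aYᵐ) = (α(a) − mλa)Yᵐ`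
(so `α'|_A = α`, `α'(Y) = −λY`) and `δ'(aYᵐ) = δ(a)Yᵐ` (so `δ'|_A = δ`, `δ'(Y) = 0`);
moreover if `δα = αδ + ηδ` on `A`, then `δ'α' = α'δ' + ηδ'` on `A[Y^{±1}; β']_P`.
Here `R` is modelled as `LaurentPolynomial (Polynomial A)`, with `ι a = C (C a)`,
`X = C X` and `Y = T 1`. -/
theorem stmt11 {K A : Type*} [Field K] [CommRing A] [Algebra K A]
    (P : PoissonStructure K A) (α δ β : A →ₗ[K] A) (lam η : K)
    (hα : (∀ a b : A, α (a * b) = α a * b + a * α b) ∧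
      ∀ a b : A, α (P.br a b) = P.br (α a) b + P.br a (α b))
    (hδ : (∀ a b : A, δ (a * b) = δ a * b + a * δ b) ∧
      ∀ a b : A, δ (P.br a b) = P.br (δ a) b + P.br a (δ b) + α a * δ b - δ a * α b)
    (hβ : (∀ a b : A, β (a * b) = β a * b + a * β b) ∧
      ∀ a b : A, β (P.br a b) = P.br (β a) b + P.br a (β b))
    (R : PoissonStructure K (LaurentPolynomial (Polynomial A)))
    (ι : A → LaurentPolynomial (Polynomial A))
    (hι : ι = fun a => LaurentPolynomial.C (Polynomial.C a))
    -- `R = A[X; α, δ]_P[Y^{±1}; β]_P`: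
    (hRC : ∀ a b : A, R.br (ι a) (ι b) = ι (P.br a b))
    (hRX : ∀ a : A, R.br (LaurentPolynomial.C Polynomial.X) (ι a)
        = ι (α a) * LaurentPolynomial.C Polynomial.X + ι (δ a))
    (hRY : ∀ a : A, R.br (T 1) (ι a) = ι (β a) * T 1)
    (hRYX : R.br (T 1) (LaurentPolynomial.C Polynomial.X)
        = lam • (LaurentPolynomial.C Polynomial.X * T 1)) :
    -- (1) `{X, aYᵐ} = α'(aYᵐ)X + δ'(aYᵐ)` with `α'(aYᵐ) = (α(a) − mλa)Yᵐ`,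
    --     `δ'(aYᵐ) = δ(a)Yᵐ`:
    (∀ (a : A) (m : ℤ),
      R.br (LaurentPolynomial.C Polynomial.X) (ι a * T m)
        = (ι (α a) - (m • lam) • ι a) * T m * LaurentPolynomial.C Polynomial.X
          + ι (δ a) * T m) ∧
    -- (2) if `δα = αδ + ηδ` on `A`, then `δ'α' = α'δ' + ηδ'` on `A[Y^{±1}; β']_P`:
    ((∀ a : A, δ (α a) = α (δ a) + η • δ a) →
      ∀ (a : A) (m : ℤ),
        (ι (δ (α a)) - (m • lam) • ι (δ a)) * T m
          = ((ι (α (δ a)) - (m • lam) • ι (δ a)) * T m + η • (ι (δ a) * T m))) :=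
  stmt11_general α δ lam η R ι hι hRX hRYX
end

section
/- Let A be a finitely generated K[t^{±1}]-algebra with generators {a_1,…,a_n}, and R = A[x;σ,Δ] an Ore extension satisfying Δσ = t^η σΔ for an integer η whose image in K is nonzero. If Δ^i(a_k) ∈ (t−1)^i (i)!_{t^η} A for all k ∈ {1,…,n} and i ≥ 0, then Δ^i(A) ⊆ (t−1)^i (i)!_{t^η} A for all i ≥ 0. -/
/-!
Write `c n = (t - 1)ⁿ (n)!_q` with `q = t^η`. The `q`-Leibniz formula writes `Δⁿ(ab)` as a sum of
`C(n, k)_q σⁿ⁻ᵏΔᵏ(a) Δⁿ⁻ᵏ(b)`, and `C(k + l, k)_q (k)!_q (l)!_q = (k + l)!_q` gives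
`c (k + l) = C(k + l, k)_q c k c l`. Hence the elements `a` with `c n ∣ Δⁿ a` for all `n` form a
subalgebra (it contains the scalars because a `σ`-derivation kills `1`), and this subalgebra
contains the generators.
-/

open LaurentPolynomial

/-- The `q`-factorial `(i)!_q = (i)_q (i−1)_q ⋯ (1)_q` at `q = t^η`,
where `(k)_q = 1 + q + ⋯ + q^{k−1}`. -/
noncomputable def qfact (K : Type*) [Field K] (η : ℤ) (i : ℕ) : LaurentPolynomial K :=
  ∏ k ∈ Finset.range i, ∑ l ∈ Finset.range (k + 1), (T η : LaurentPolynomial K) ^ l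

open Finset

section QAnalogues

variable {R : Type*} [CommRing R] (q : R)

/-- The Gaussian binomial coefficient `C(k + l, k)_q`, indexed by `k` and `l = (k + l) - k`. -/
def qBinom : ℕ → ℕ → R
  | 0, _ => 1
  | _, 0 => 1
  | k + 1, l + 1 => qBinom (k + 1) l + q ^ (l + 1) * qBinom k (l + 1)

def qFactorial (n : ℕ) : R := ∏ k ∈ range n, ∑ j ∈ range (k + 1), q ^ j

@[simp] lemma qBinom_zero_left (l : ℕ) : qBinom q 0 l = 1 := by rw [qBinom]

@[simp] lemma qBinom_zero_right (k : ℕ) : qBinom q k 0 = 1 := by cases k <;> simp [qBinom]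

lemma qBinom_succ_succ (k l : ℕ) :
    qBinom q (k + 1) (l + 1) = qBinom q (k + 1) l + q ^ (l + 1) * qBinom q k (l + 1) := by
  rw [qBinom]

lemma qFactorial_succ (n : ℕ) :
    qFactorial q (n + 1) = qFactorial q n * ∑ j ∈ range (n + 1), q ^ j :=
  prod_range_succ _ _

lemma geom_sum_range_add (a b : ℕ) :
    ∑ j ∈ range (a + b), q ^ j = ∑ j ∈ range a, q ^ j + q ^ a * ∑ j ∈ range b, q ^ j := by
  simp only [sum_range_add, mul_sum, pow_add]

theorem qBinom_mul_qFactorial_mul_qFactorial (k l : ℕ) :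
    qBinom q k l * (qFactorial q k * qFactorial q l) = qFactorial q (k + l) := by
  induction k, l using qBinom.induct with
  | case1 l => simp [qFactorial]
  | case2 k => simp [qFactorial]
  | case3 k l ih₁ ih₂ =>
    have hsplit : qFactorial q (k + 1 + (l + 1)) = qFactorial q (k + l + 1) *
        (∑ j ∈ range (l + 1), q ^ j + q ^ (l + 1) * ∑ j ∈ range (k + 1), q ^ j) := by
      rw [show k + 1 + (l + 1) = k + l + 1 + 1 by ring, qFactorial_succ,
        show k + l + 1 + 1 = (l + 1) + (k + 1) by ring, geom_sum_range_add]
    rw [show k + 1 + l = k + l + 1 by ring, qFactorial_succ q k] at ih₁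
    rw [show k + (l + 1) = k + l + 1 by ring, qFactorial_succ q l] at ih₂
    rw [qBinom_succ_succ, hsplit, qFactorial_succ q k, qFactorial_succ q l]
    linear_combination (∑ j ∈ range (l + 1), q ^ j) * ih₁ +
      q ^ (l + 1) * (∑ j ∈ range (k + 1), q ^ j) * ih₂

variable {M : Type*} [AddCommMonoid M] [Module R M]

theorem sum_antidiagonal_succ_qBinom_smul (f : ℕ → ℕ → M) (n : ℕ) :
    ∑ p ∈ antidiagonal (n + 1), qBinom q p.1 p.2 • f p.1 p.2 =
      ∑ p ∈ antidiagonal n, qBinom q p.1 p.2 • f p.1 (p.2 + 1) +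
        ∑ p ∈ antidiagonal n, (q ^ p.2 * qBinom q p.1 p.2) • f (p.1 + 1) p.2 := by
  have hsplit : ∀ p ∈ antidiagonal (n + 1), qBinom q p.1 p.2 • f p.1 p.2 =
      (if p.2 = 0 then 0 else qBinom q p.1 (p.2 - 1) • f p.1 p.2) +
        (if p.1 = 0 then 0 else (q ^ p.2 * qBinom q (p.1 - 1) p.2) • f p.1 p.2) := by
    rintro ⟨_ | k, _ | l⟩ hp
    · simp at hp
    · simp
    · simp
    · simp [qBinom_succ_succ, add_smul]
  rw [sum_congr rfl hsplit, sum_add_distrib, Nat.sum_antidiagonal_succ', Nat.sum_antidiagonal_succ]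
  simp

end QAnalogues

section SkewDerivation

variable {R A : Type*} [CommRing R] [Ring A] [Algebra R A] {q : R} {σ : A →ₐ[R] A}
  {Δ : Module.End R A}

theorem apply_pow_apply_eq_pow_smul (hcomm : ∀ a, Δ (σ a) = q • σ (Δ a)) (m : ℕ) (a : A) :
    Δ ((σ ^ m) a) = q ^ m • (σ ^ m) (Δ a) := by
  induction m with
  | zero => simp
  | succ m ih => rw [pow_succ', AlgHom.mul_apply, hcomm, ih, map_smul, smul_smul, ← pow_succ',
      AlgHom.mul_apply]

theorem pow_apply_mul_eq_sum_qBinom (hder : ∀ a b, Δ (a * b) = σ a * Δ b + Δ a * b)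
    (hcomm : ∀ a, Δ (σ a) = q • σ (Δ a)) (n : ℕ) (a b : A) :
    (Δ ^ n) (a * b) =
      ∑ p ∈ antidiagonal n, qBinom q p.1 p.2 • ((σ ^ p.2) ((Δ ^ p.1) a) * (Δ ^ p.2) b) := by
  induction n with
  | zero => simp
  | succ n ih =>
    rw [sum_antidiagonal_succ_qBinom_smul q (fun k l ↦ (σ ^ l) ((Δ ^ k) a) * (Δ ^ l) b), pow_succ',
      Module.End.mul_apply, ih, map_sum, ← sum_add_distrib]
    refine sum_congr rfl fun p _ ↦ ?_
    rw [map_smul, hder, apply_pow_apply_eq_pow_smul hcomm, pow_succ', pow_succ', pow_succ',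
      AlgHom.mul_apply, Module.End.mul_apply, Module.End.mul_apply, smul_add, smul_mul_assoc,
      smul_smul, mul_comm]

def IteratesDvd (Δ : Module.End R A) (c : ℕ → R) (a : A) : Prop :=
  ∀ n, ∃ b, (Δ ^ n) a = c n • b

variable {c : ℕ → R}

theorem IteratesDvd.add {a b : A} (ha : IteratesDvd Δ c a) (hb : IteratesDvd Δ c b) :
    IteratesDvd Δ c (a + b) := fun n ↦ by
  obtain ⟨a', ha'⟩ := ha n
  obtain ⟨b', hb'⟩ := hb n
  exact ⟨a' + b', by rw [map_add, ha', hb', smul_add]⟩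

theorem apply_one_eq_zero (hder : ∀ a b, Δ (a * b) = σ a * Δ b + Δ a * b) : Δ 1 = 0 := by
  simpa using hder 1 1

theorem iteratesDvd_algebraMap (hder : ∀ a b, Δ (a * b) = σ a * Δ b + Δ a * b) (hc0 : c 0 ∣ 1)
    (r : R) : IteratesDvd Δ c (algebraMap R A r)
  | 0 => by
    obtain ⟨u, hu⟩ := hc0
    exact ⟨(u * r) • 1, by rw [smul_smul, ← mul_assoc, ← hu, one_mul, Algebra.smul_def, mul_one,
      pow_zero, Module.End.one_apply]⟩
  | n + 1 => ⟨0, by rw [pow_succ, Module.End.mul_apply, Algebra.algebraMap_eq_smul_one, map_smul,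
      apply_one_eq_zero hder, smul_zero, map_zero, smul_zero]⟩

theorem IteratesDvd.mul (hder : ∀ a b, Δ (a * b) = σ a * Δ b + Δ a * b)
    (hcomm : ∀ a, Δ (σ a) = q • σ (Δ a)) (hc : ∀ k l, c (k + l) ∣ qBinom q k l * (c k * c l))
    {a b : A} (ha : IteratesDvd Δ c a) (hb : IteratesDvd Δ c b) :
    IteratesDvd Δ c (a * b) := fun n ↦ by
  rw [pow_apply_mul_eq_sum_qBinom hder hcomm]
  refine sum_induction _ (fun x ↦ ∃ y, x = c n • y)
    (fun _ _ ⟨x, hx⟩ ⟨y, hy⟩ ↦ ⟨x + y, by rw [hx, hy, smul_add]⟩) ⟨0, (smul_zero _).symm⟩ ?_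
  rintro ⟨k, l⟩ hkl
  rw [HasAntidiagonal.mem_antidiagonal] at hkl
  subst hkl
  obtain ⟨a', ha'⟩ := ha k
  obtain ⟨b', hb'⟩ := hb l
  obtain ⟨d, hd⟩ := hc k l
  refine ⟨d • ((σ ^ l) a' * b'), ?_⟩
  rw [ha', hb', map_smul, smul_mul_smul_comm, smul_smul, smul_smul, hd]

theorem iteratesDvd_of_adjoin_eq_top (hder : ∀ a b, Δ (a * b) = σ a * Δ b + Δ a * b)
    (hcomm : ∀ a, Δ (σ a) = q • σ (Δ a)) (hc0 : c 0 ∣ 1)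
    (hc : ∀ k l, c (k + l) ∣ qBinom q k l * (c k * c l)) {s : Set A}
    (hgen : Algebra.adjoin R s = ⊤) (hs : ∀ a ∈ s, IteratesDvd Δ c a) (a : A) :
    IteratesDvd Δ c a :=
  Algebra.adjoin_induction (fun x hx ↦ hs x hx) (iteratesDvd_algebraMap hder hc0)
    (fun _ _ _ _ ↦ IteratesDvd.add) (fun _ _ _ _ ↦ IteratesDvd.mul hder hcomm hc)
    (hgen ▸ Algebra.mem_top : a ∈ Algebra.adjoin R s)

end SkewDerivation

theorem stmt19_general {K A : Type*} [Field K] [Ring A]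
    [Algebra (LaurentPolynomial K) A]
    (s : Finset A) (hgen : Algebra.adjoin (LaurentPolynomial K) (s : Set A) = ⊤)
    (σ : A ≃+* A) (hσl : ∀ (l : LaurentPolynomial K) (a : A), σ (l • a) = l • σ a)
    (Δ : A → A) (hΔadd : ∀ a b : A, Δ (a + b) = Δ a + Δ b)
    (hΔl : ∀ (l : LaurentPolynomial K) (a : A), Δ (l • a) = l • Δ a)
    (hΔder : ∀ a b : A, Δ (a * b) = σ a * Δ b + Δ a * b)
    (η : ℤ)
    (hcomm : ∀ a : A, Δ (σ a) = (T η : LaurentPolynomial K) • σ (Δ a))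
    (hgens : ∀ a ∈ s, ∀ i : ℕ, ∃ b : A,
      Δ^[i] a = (((T 1 - 1 : LaurentPolynomial K) ^ i) * qfact K η i) • b) :
    ∀ (a : A) (i : ℕ), ∃ b : A,
      Δ^[i] a = (((T 1 - 1 : LaurentPolynomial K) ^ i) * qfact K η i) • b := by
  let Δ' : Module.End (LaurentPolynomial K) A := ⟨⟨Δ, hΔadd⟩, hΔl⟩
  let c (n : ℕ) : LaurentPolynomial K := (T 1 - 1) ^ n * qFactorial (T η) n
  have hc0 : c 0 ∣ 1 := by simp [c, qFactorial]
  have hc (k l : ℕ) : c (k + l) ∣ qBinom (T η) k l * (c k * c l) := dvd_of_eq <| by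
    simp only [c, pow_add, ← qBinom_mul_qFactorial_mul_qFactorial (T η) k l]
    ring
  have hdvd := iteratesDvd_of_adjoin_eq_top (σ := AlgHom.mk' σ.toRingHom hσl) (Δ := Δ') hΔder hcomm
    hc0 hc hgen (fun a ha n ↦ by rw [Module.End.pow_apply]; exact hgens a ha n)
  intro a i
  obtain ⟨b, hb⟩ := hdvd a i
  exact ⟨b, (Module.End.pow_apply Δ' i a).symm.trans hb⟩

/-- If `A` is a finitely generated `K[t^{±1}]`-algebra, `Δσ = t^η σΔ`, and
`Δⁱ(a_k) ∈ (t−1)ⁱ (i)!_{t^η} A` on a finite generating set `{a₁,…,aₙ}`, then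
`Δⁱ(A) ⊆ (t−1)ⁱ (i)!_{t^η} A` for all `i ≥ 0`. -/
theorem stmt19 {K A : Type*} [Field K] [Ring A]
    [Algebra (LaurentPolynomial K) A]
    (s : Finset A) (hgen : Algebra.adjoin (LaurentPolynomial K) (s : Set A) = ⊤)
    (σ : A ≃+* A) (hσl : ∀ (l : LaurentPolynomial K) (a : A), σ (l • a) = l • σ a)
    (Δ : A → A) (hΔadd : ∀ a b : A, Δ (a + b) = Δ a + Δ b)
    (hΔl : ∀ (l : LaurentPolynomial K) (a : A), Δ (l • a) = l • Δ a)
    (hΔder : ∀ a b : A, Δ (a * b) = σ a * Δ b + Δ a * b)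
    (η : ℤ) (hη : ((η : ℤ) : K) ≠ 0)
    (hcomm : ∀ a : A, Δ (σ a) = (T η : LaurentPolynomial K) • σ (Δ a))
    (hgens : ∀ a ∈ s, ∀ i : ℕ, ∃ b : A,
      Δ^[i] a = (((T 1 - 1 : LaurentPolynomial K) ^ i) * qfact K η i) • b) :
    ∀ (a : A) (i : ℕ), ∃ b : A,
      Δ^[i] a = (((T 1 - 1 : LaurentPolynomial K) ^ i) * qfact K η i) • b :=
  stmt19_general s hgen σ hσl Δ hΔadd hΔl hΔder η hcomm hgens
end
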